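/- On ℝ^{11} with coordinates (t, x_0, y_0, x_1, y_1, x_2, y_2, x_3, y_3, x_4, y_4), fix real parameters b_3, c_3 and define the vector fields W'_1 = x_4·( x_2·(∂_t + x_1∂_{x_0} + y_1∂_{y_0}) + ∂_{x_1} + y_2∂_{y_1} + (b_3 + x_3)∂_{x_2} + (c_3 + y_3)∂_{y_2} ) + y_4∂_{x_3} + ∂_{y_3}, W'_2 = ∂_{x_4}, W'_3 = ∂_{y_4}. Let V_1 ⊆ V_2 ⊆ … be the small flag of (W'_1, W'_2, W'_3). Then every vector field v ∈ V_5 satisfies v(0) ∈ span(e_{x_1}, e_{y_1}, e_{x_2}, e_{y_2}, e_{x_3}, e_{y_3}, e_{x_4}, e_{y_4}); that is, the components of v(0) along e_t, e_{x_0}, e_{y_0} all vanish. -/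

import Mathlib

/-- The Lie bracket of vector fields on `ℝ^N`:
`[v, w](p) = Dw(p)·v(p) − Dv(p)·w(p)`. -/
noncomputable def lieBracket {N : ℕ} (v w : (Fin N → ℝ) → Fin N → ℝ) :
    (Fin N → ℝ) → Fin N → ℝ :=
  fun p => fderiv ℝ w p (v p) - fderiv ℝ v p (w p)

/-- Membership in the small flag `V₁ ⊆ V₂ ⊆ …` of a triple of vector fields
`(W₁, W₂, W₃)` on `ℝ^{11}`: `V₁` is the `C^∞(ℝ^{11})`-module generated by
`W₁, W₂, W₃`, and `V_{i+1}` is the `C^∞(ℝ^{11})`-module generated by `V_i`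
together with all brackets `[u, v]`, `u ∈ V₁`, `v ∈ V_i`. -/
inductive SmallFlagMem (W1 W2 W3 : (Fin 11 → ℝ) → Fin 11 → ℝ) :
    ℕ → ((Fin 11 → ℝ) → Fin 11 → ℝ) → Prop
  | gen1 : SmallFlagMem W1 W2 W3 1 W1
  | gen2 : SmallFlagMem W1 W2 W3 1 W2
  | gen3 : SmallFlagMem W1 W2 W3 1 W3
  | zero (i : ℕ) : SmallFlagMem W1 W2 W3 i 0
  | add {i : ℕ} {v w : (Fin 11 → ℝ) → Fin 11 → ℝ} :
      SmallFlagMem W1 W2 W3 i v → SmallFlagMem W1 W2 W3 i w →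
      SmallFlagMem W1 W2 W3 i (v + w)
  | smul {i : ℕ} {v : (Fin 11 → ℝ) → Fin 11 → ℝ} (f : (Fin 11 → ℝ) → ℝ) :
      ContDiff ℝ (⊤ : ℕ∞) f → SmallFlagMem W1 W2 W3 i v →
      SmallFlagMem W1 W2 W3 i (fun p => f p • v p)
  | mono {i : ℕ} {v : (Fin 11 → ℝ) → Fin 11 → ℝ} :
      SmallFlagMem W1 W2 W3 i v → SmallFlagMem W1 W2 W3 (i + 1) v
  | bracket {i : ℕ} {u v : (Fin 11 → ℝ) → Fin 11 → ℝ} :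
      SmallFlagMem W1 W2 W3 1 u → SmallFlagMem W1 W2 W3 i v →
      SmallFlagMem W1 W2 W3 (i + 1) (lieBracket u v)

/-- Coordinates on `ℝ^{11}`: `(t, x₀, y₀, x₁, y₁, x₂, y₂, x₃, y₃, x₄, y₄)` =
indices `0, …, 10`.  The EKR generator of type 1.2.1.3:
`W₁' = x₄( x₂(∂_t + x₁∂_{x₀} + y₁∂_{y₀}) + ∂_{x₁} + y₂∂_{y₁} + (b₃+x₃)∂_{x₂}
+ (c₃+y₃)∂_{y₂} ) + y₄∂_{x₃} + ∂_{y₃}`. -/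
def W1ekr' (b3 c3 : ℝ) : (Fin 11 → ℝ) → Fin 11 → ℝ := fun p =>
  p 9 • (p 5 • (Pi.single 0 (1 : ℝ) + p 3 • (Pi.single 1 (1 : ℝ) : Fin 11 → ℝ)
        + p 4 • (Pi.single 2 (1 : ℝ) : Fin 11 → ℝ))
      + Pi.single 3 1
      + p 6 • (Pi.single 4 (1 : ℝ) : Fin 11 → ℝ)
      + (b3 + p 7) • (Pi.single 5 (1 : ℝ) : Fin 11 → ℝ)
      + (c3 + p 8) • (Pi.single 6 (1 : ℝ) : Fin 11 → ℝ))
    + p 10 • (Pi.single 7 (1 : ℝ) : Fin 11 → ℝ)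
    + Pi.single 8 1

/-- `W₂' = ∂_{x₄}`. -/
def W2ekr' : (Fin 11 → ℝ) → Fin 11 → ℝ := fun _ => Pi.single 9 1

/-- `W₃' = ∂_{y₄}`. -/
def W3ekr' : (Fin 11 → ℝ) → Fin 11 → ℝ := fun _ => Pi.single 10 1

abbrev VV := Fin 11 → ℝ
noncomputable abbrev sgl (k : Fin 11) : VV := Pi.single k 1
noncomputable def prj (i : Fin 11) : VV →L[ℝ] ℝ :=
  ContinuousLinearMap.proj (R := ℝ) (φ := fun _ : Fin 11 => ℝ) i
lemma hproj (i : Fin 11) (p : VV) : HasFDerivAt (fun q : VV => q i) (prj i) p :=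
  (prj i).hasFDerivAt
lemma cproj (i : Fin 11) : ContDiff ℝ (⊤ : ℕ∞) (fun q : VV => q i) := (prj i).contDiff

noncomputable def gW1 (b3 c3 : ℝ) : VV → VV := fun p =>
  (p 9 * p 5) • sgl 0 + (p 9 * p 5 * p 3) • sgl 1 + (p 9 * p 5 * p 4) • sgl 2
  + p 9 • sgl 3 + (p 9 * p 6) • sgl 4 + (p 9 * (b3 + p 7)) • sgl 5
  + (p 9 * (c3 + p 8)) • sgl 6 + p 10 • sgl 7 + sgl 8

noncomputable def gX (b3 c3 : ℝ) : VV → VV := fun p =>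
  p 5 • sgl 0 + (p 5 * p 3) • sgl 1 + (p 5 * p 4) • sgl 2 + sgl 3
  + p 6 • sgl 4 + (b3 + p 7) • sgl 5 + (c3 + p 8) • sgl 6

noncomputable def gS : VV → VV := fun p => p 9 • sgl 5
noncomputable def gY : VV → VV := fun p => p 10 • sgl 5 + sgl 6
noncomputable def gQ : VV → VV := fun p =>
  (p 9 * p 9) • sgl 0 + (p 9 * p 9 * p 3) • sgl 1 + (p 9 * p 9 * p 4) • sgl 2
noncomputable def gR : VV → VV := fun p =>
  (p 9 * p 10) • sgl 0 + (p 9 * p 10 * p 3) • sgl 1 + (p 9 * p 10 * p 4) • sgl 2 + p 9 • sgl 4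
noncomputable def cst (k : Fin 11) : VV → VV := fun _ => sgl k

/-- The list of generators. -/
noncomputable def gg (b3 c3 : ℝ) : Fin 10 → VV → VV :=
  ![gW1 b3 c3, cst 9, cst 10, gX b3 c3, cst 7, gS, gY, cst 5, gQ, gR]

lemma hasF_gW1 (b3 c3 : ℝ) (p : VV) : HasFDerivAt (gW1 b3 c3)
    ((p 9 • prj 5 + p 5 • prj 9).smulRight (sgl 0)
      + ((p 9 * p 5) • prj 3 + p 3 • (p 9 • prj 5 + p 5 • prj 9)).smulRight (sgl 1)
      + ((p 9 * p 5) • prj 4 + p 4 • (p 9 • prj 5 + p 5 • prj 9)).smulRight (sgl 2)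
      + (prj 9).smulRight (sgl 3)
      + (p 9 • prj 6 + p 6 • prj 9).smulRight (sgl 4)
      + (p 9 • prj 7 + (b3 + p 7) • prj 9).smulRight (sgl 5)
      + (p 9 • prj 8 + (c3 + p 8) • prj 9).smulRight (sgl 6)
      + (prj 10).smulRight (sgl 7)) p := by
  unfold gW1
  exact (((((((((hproj 9 p).mul (hproj 5 p)).smul_const (sgl 0)).add
    ((((hproj 9 p).mul (hproj 5 p)).mul (hproj 3 p)).smul_const (sgl 1))).add
    ((((hproj 9 p).mul (hproj 5 p)).mul (hproj 4 p)).smul_const (sgl 2))).add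
    ((hproj 9 p).smul_const (sgl 3))).add
    (((hproj 9 p).mul ((hproj 6 p))).smul_const (sgl 4))).add
    (((hproj 9 p).mul ((hproj 7 p).const_add b3)).smul_const (sgl 5))).add
    (((hproj 9 p).mul ((hproj 8 p).const_add c3)).smul_const (sgl 6))).add
    ((hproj 10 p).smul_const (sgl 7)) |>.add_const (sgl 8)

lemma fderiv_gW1 (b3 c3 : ℝ) (p w : VV) : fderiv ℝ (gW1 b3 c3) p w =
    (p 9 * w 5 + p 5 * w 9) • sgl 0
    + ((p 9 * p 5) * w 3 + p 3 * (p 9 * w 5 + p 5 * w 9)) • sgl 1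
    + ((p 9 * p 5) * w 4 + p 4 * (p 9 * w 5 + p 5 * w 9)) • sgl 2
    + w 9 • sgl 3 + (p 9 * w 6 + p 6 * w 9) • sgl 4
    + (p 9 * w 7 + (b3 + p 7) * w 9) • sgl 5
    + (p 9 * w 8 + (c3 + p 8) * w 9) • sgl 6 + w 10 • sgl 7 := by
  rw [(hasF_gW1 b3 c3 p).fderiv]; simp [prj]; all_goals module

lemma fderiv_gX (b3 c3 : ℝ) (p w : VV) : fderiv ℝ (gX b3 c3) p w =
    w 5 • sgl 0 + (p 5 * w 3 + p 3 * w 5) • sgl 1 + (p 5 * w 4 + p 4 * w 5) • sgl 2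
    + w 6 • sgl 4 + w 7 • sgl 5 + w 8 • sgl 6 := by
  have h : HasFDerivAt (gX b3 c3) _ p :=
    (((((((hproj 5 p).smul_const (sgl 0)).add
      (((hproj 5 p).mul (hproj 3 p)).smul_const (sgl 1))).add
      (((hproj 5 p).mul (hproj 4 p)).smul_const (sgl 2))).add_const (sgl 3)).add
      ((hproj 6 p).smul_const (sgl 4))).add
      (((hproj 7 p).const_add b3).smul_const (sgl 5))).add
      (((hproj 8 p).const_add c3).smul_const (sgl 6))
  rw [h.fderiv]; simp [prj]; all_goals module

lemma fderiv_gS (p w : VV) : fderiv ℝ gS p w = w 9 • sgl 5 := by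
  have h : HasFDerivAt gS _ p := (hproj 9 p).smul_const (sgl 5)
  rw [h.fderiv]; simp [prj]; all_goals module

lemma fderiv_gY (p w : VV) : fderiv ℝ gY p w = w 10 • sgl 5 := by
  have h : HasFDerivAt gY _ p := ((hproj 10 p).smul_const (sgl 5)).add_const (sgl 6)
  rw [h.fderiv]; simp [prj]; all_goals module

lemma fderiv_gQ (p w : VV) : fderiv ℝ gQ p w =
    (p 9 * w 9 + p 9 * w 9) • sgl 0
    + ((p 9 * p 9) * w 3 + p 3 * (p 9 * w 9 + p 9 * w 9)) • sgl 1
    + ((p 9 * p 9) * w 4 + p 4 * (p 9 * w 9 + p 9 * w 9)) • sgl 2 := by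
  have h : HasFDerivAt gQ _ p := (((((hproj 9 p).mul (hproj 9 p))).smul_const (sgl 0)).add
      ((((hproj 9 p).mul (hproj 9 p)).mul (hproj 3 p)).smul_const (sgl 1))).add
      ((((hproj 9 p).mul (hproj 9 p)).mul (hproj 4 p)).smul_const (sgl 2))
  rw [h.fderiv]; simp [prj]; all_goals module

lemma fderiv_gR (p w : VV) : fderiv ℝ gR p w =
    (p 9 * w 10 + p 10 * w 9) • sgl 0
    + ((p 9 * p 10) * w 3 + p 3 * (p 9 * w 10 + p 10 * w 9)) • sgl 1
    + ((p 9 * p 10) * w 4 + p 4 * (p 9 * w 10 + p 10 * w 9)) • sgl 2 + w 9 • sgl 4 := by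
  have h : HasFDerivAt gR _ p := ((((((hproj 9 p).mul (hproj 10 p))).smul_const (sgl 0)).add
      ((((hproj 9 p).mul (hproj 10 p)).mul (hproj 3 p)).smul_const (sgl 1))).add
      ((((hproj 9 p).mul (hproj 10 p)).mul (hproj 4 p)).smul_const (sgl 2))).add
      ((hproj 9 p).smul_const (sgl 4))
  rw [h.fderiv]; simp [prj]; all_goals module

lemma fderiv_cst (k : Fin 11) (p : VV) : fderiv ℝ (cst k) p = 0 := by
  unfold cst; exact fderiv_const_apply _
set_option maxHeartbeats 1000000

section Brackets
variable (b3 c3 : ℝ)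

lemma lb_0_0 : lieBracket (gW1 b3 c3) (gW1 b3 c3) = fun p => (0:ℝ) • gW1 b3 c3 p := by
  funext p
  show fderiv ℝ (gW1 b3 c3) p (gW1 b3 c3 p) - fderiv ℝ (gW1 b3 c3) p (gW1 b3 c3 p) = _
  simp

lemma lb_0_1 : lieBracket (gW1 b3 c3) (cst 9) = fun p => (-1:ℝ) • gX b3 c3 p := by
  funext p
  show fderiv ℝ (cst 9) p (gW1 b3 c3 p) - fderiv ℝ (gW1 b3 c3) p (cst 9 p) = _
  rw [fderiv_cst, fderiv_gW1]
  simp [cst, gX, Pi.single_apply]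
  all_goals module

lemma lb_0_2 : lieBracket (gW1 b3 c3) (cst 10) = fun p => (-1:ℝ) • cst 7 p := by
  funext p
  show fderiv ℝ (cst 10) p (gW1 b3 c3 p) - fderiv ℝ (gW1 b3 c3) p (cst 10 p) = _
  rw [fderiv_cst, fderiv_gW1]
  simp [cst, Pi.single_apply]
  all_goals module

lemma lb_0_3 : lieBracket (gW1 b3 c3) (gX b3 c3) = fun p => (1:ℝ) • gY p := by
  funext p
  show fderiv ℝ (gX b3 c3) p (gW1 b3 c3 p) - fderiv ℝ (gW1 b3 c3) p (gX b3 c3 p) = _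
  rw [fderiv_gX, fderiv_gW1]
  simp [gW1, gX, gY, Pi.single_apply]
  all_goals module

lemma lb_0_4 : lieBracket (gW1 b3 c3) (cst 7) = fun p => (-1:ℝ) • gS p := by
  funext p
  show fderiv ℝ (cst 7) p (gW1 b3 c3 p) - fderiv ℝ (gW1 b3 c3) p (cst 7 p) = _
  rw [fderiv_cst, fderiv_gW1]
  simp [cst, gS, Pi.single_apply]
  all_goals module

lemma lb_0_5 : lieBracket (gW1 b3 c3) gS = fun p => (-1:ℝ) • gQ p := by
  funext p
  show fderiv ℝ gS p (gW1 b3 c3 p) - fderiv ℝ (gW1 b3 c3) p (gS p) = _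
  rw [fderiv_gS, fderiv_gW1]
  simp [gW1, gS, gQ, Pi.single_apply]
  all_goals module

lemma lb_0_6 : lieBracket (gW1 b3 c3) gY = fun p => (-1:ℝ) • gR p := by
  funext p
  show fderiv ℝ gY p (gW1 b3 c3 p) - fderiv ℝ (gW1 b3 c3) p (gY p) = _
  rw [fderiv_gY, fderiv_gW1]
  simp [gW1, gY, gR, Pi.single_apply]
  all_goals module

lemma lb_1_0 : lieBracket (cst 9) (gW1 b3 c3) = fun p => (1:ℝ) • gX b3 c3 p := by
  funext p
  show fderiv ℝ (gW1 b3 c3) p (cst 9 p) - fderiv ℝ (cst 9) p (gW1 b3 c3 p) = _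
  rw [fderiv_cst, fderiv_gW1]
  simp [cst, gX, Pi.single_apply]
  all_goals module

lemma lb_cst_cst (k l : Fin 11) : lieBracket (cst k) (cst l) = fun p => (0:ℝ) • gW1 b3 c3 p := by
  funext p
  show fderiv ℝ (cst l) p (cst k p) - fderiv ℝ (cst k) p (cst l p) = _
  rw [fderiv_cst, fderiv_cst]; simp

lemma lb_1_3 : lieBracket (cst 9) (gX b3 c3) = fun p => (0:ℝ) • gW1 b3 c3 p := by
  funext p
  show fderiv ℝ (gX b3 c3) p (cst 9 p) - fderiv ℝ (cst 9) p (gX b3 c3 p) = _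
  rw [fderiv_cst, fderiv_gX]
  simp [cst, Pi.single_apply]

lemma lb_1_5 : lieBracket (cst 9) gS = fun p => (1:ℝ) • cst 5 p := by
  funext p
  show fderiv ℝ gS p (cst 9 p) - fderiv ℝ (cst 9) p (gS p) = _
  rw [fderiv_cst, fderiv_gS]
  simp [cst, Pi.single_apply]

lemma lb_1_6 : lieBracket (cst 9) gY = fun p => (0:ℝ) • gW1 b3 c3 p := by
  funext p
  show fderiv ℝ gY p (cst 9 p) - fderiv ℝ (cst 9) p (gY p) = _
  rw [fderiv_cst, fderiv_gY]
  simp [cst, Pi.single_apply]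

lemma lb_2_0 : lieBracket (cst 10) (gW1 b3 c3) = fun p => (1:ℝ) • cst 7 p := by
  funext p
  show fderiv ℝ (gW1 b3 c3) p (cst 10 p) - fderiv ℝ (cst 10) p (gW1 b3 c3 p) = _
  rw [fderiv_cst, fderiv_gW1]
  simp [cst, Pi.single_apply]
  all_goals module

lemma lb_2_3 : lieBracket (cst 10) (gX b3 c3) = fun p => (0:ℝ) • gW1 b3 c3 p := by
  funext p
  show fderiv ℝ (gX b3 c3) p (cst 10 p) - fderiv ℝ (cst 10) p (gX b3 c3 p) = _
  rw [fderiv_cst, fderiv_gX]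
  simp [cst, Pi.single_apply]

lemma lb_2_5 : lieBracket (cst 10) gS = fun p => (0:ℝ) • gW1 b3 c3 p := by
  funext p
  show fderiv ℝ gS p (cst 10 p) - fderiv ℝ (cst 10) p (gS p) = _
  rw [fderiv_cst, fderiv_gS]
  simp [cst, Pi.single_apply]

lemma lb_2_6 : lieBracket (cst 10) gY = fun p => (1:ℝ) • cst 5 p := by
  funext p
  show fderiv ℝ gY p (cst 10 p) - fderiv ℝ (cst 10) p (gY p) = _
  rw [fderiv_cst, fderiv_gY]
  simp [cst, Pi.single_apply]

/-- The master bracket table. -/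
lemma lbtable (a j : Fin 10) (ha : (a:ℕ) < 3) (hj : (j:ℕ) < 7) :
    ∃ (ε : ℝ) (k : Fin 10),
      lieBracket (gg b3 c3 a) (gg b3 c3 j) = (fun p => ε • gg b3 c3 k p)
      ∧ ((j:ℕ) < 3 → (k:ℕ) < 5) ∧ ((j:ℕ) < 5 → (k:ℕ) < 7) ∧ (k:ℕ) < 10 := by
  fin_cases a <;> fin_cases j <;> simp only [Fin.isValue] at *
  · exact ⟨0, 0, lb_0_0 b3 c3, by decide⟩
  · exact ⟨-1, 3, lb_0_1 b3 c3, by decide⟩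
  · exact ⟨-1, 4, lb_0_2 b3 c3, by decide⟩
  · exact ⟨1, 6, lb_0_3 b3 c3, by decide⟩
  · exact ⟨-1, 5, lb_0_4 b3 c3, by decide⟩
  · exact ⟨-1, 8, lb_0_5 b3 c3, by decide⟩
  · exact ⟨-1, 9, lb_0_6 b3 c3, by decide⟩
  · exact absurd hj (by decide)
  · exact absurd hj (by decide)
  · exact absurd hj (by decide)
  · exact ⟨1, 3, lb_1_0 b3 c3, by decide⟩
  · exact ⟨0, 0, lb_cst_cst b3 c3 9 9, by decide⟩
  · exact ⟨0, 0, lb_cst_cst b3 c3 9 10, by decide⟩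
  · exact ⟨0, 0, lb_1_3 b3 c3, by decide⟩
  · exact ⟨0, 0, lb_cst_cst b3 c3 9 7, by decide⟩
  · exact ⟨1, 7, lb_1_5, by decide⟩
  · exact ⟨0, 0, lb_1_6 b3 c3, by decide⟩
  · exact absurd hj (by decide)
  · exact absurd hj (by decide)
  · exact absurd hj (by decide)
  · exact ⟨1, 4, lb_2_0 b3 c3, by decide⟩
  · exact ⟨0, 0, lb_cst_cst b3 c3 10 9, by decide⟩
  · exact ⟨0, 0, lb_cst_cst b3 c3 10 10, by decide⟩
  · exact ⟨0, 0, lb_2_3 b3 c3, by decide⟩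
  · exact ⟨0, 0, lb_cst_cst b3 c3 10 7, by decide⟩
  · exact ⟨0, 0, lb_2_5 b3 c3, by decide⟩
  · exact ⟨1, 7, lb_2_6, by decide⟩
  · exact absurd hj (by decide)
  · exact absurd hj (by decide)
  · exact absurd hj (by decide)
  · exact absurd ha (by decide)
  · exact absurd ha (by decide)
  · exact absurd ha (by decide)
  · exact absurd ha (by decide)
  · exact absurd ha (by decide)
  · exact absurd ha (by decide)
  · exact absurd ha (by decide)
  · exact absurd ha (by decide)
  · exact absurd ha (by decide)
  · exact absurd ha (by decide)
  · exact absurd ha (by decide)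
  · exact absurd ha (by decide)
  · exact absurd ha (by decide)
  · exact absurd ha (by decide)
  · exact absurd ha (by decide)
  · exact absurd ha (by decide)
  · exact absurd ha (by decide)
  · exact absurd ha (by decide)
  · exact absurd ha (by decide)
  · exact absurd ha (by decide)
  · exact absurd ha (by decide)
  · exact absurd ha (by decide)
  · exact absurd ha (by decide)
  · exact absurd ha (by decide)
  · exact absurd ha (by decide)
  · exact absurd ha (by decide)
  · exact absurd ha (by decide)
  · exact absurd ha (by decide)
  · exact absurd ha (by decide)
  · exact absurd ha (by decide)
  · exact absurd ha (by decide)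
  · exact absurd ha (by decide)
  · exact absurd ha (by decide)
  · exact absurd ha (by decide)
  · exact absurd ha (by decide)
  · exact absurd ha (by decide)
  · exact absurd ha (by decide)
  · exact absurd ha (by decide)
  · exact absurd ha (by decide)
  · exact absurd ha (by decide)
  · exact absurd ha (by decide)
  · exact absurd ha (by decide)
  · exact absurd ha (by decide)
  · exact absurd ha (by decide)
  · exact absurd ha (by decide)
  · exact absurd ha (by decide)
  · exact absurd ha (by decide)
  · exact absurd ha (by decide)
  · exact absurd ha (by decide)
  · exact absurd ha (by decide)
  · exact absurd ha (by decide)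
  · exact absurd ha (by decide)
  · exact absurd ha (by decide)
  · exact absurd ha (by decide)
  · exact absurd ha (by decide)
  · exact absurd ha (by decide)
  · exact absurd ha (by decide)
  · exact absurd ha (by decide)
  · exact absurd ha (by decide)
  · exact absurd ha (by decide)
  · exact absurd ha (by decide)
  · exact absurd ha (by decide)
  · exact absurd ha (by decide)
  · exact absurd ha (by decide)
  · exact absurd ha (by decide)
  · exact absurd ha (by decide)
  · exact absurd ha (by decide)
  · exact absurd ha (by decide)
  · exact absurd ha (by decide)
  · exact absurd ha (by decide)
end Brackets

section Mspan
variable (b3 c3 : ℝ)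

noncomputable def sumG (c : Fin 10 → VV → ℝ) : VV → VV :=
  fun p => ∑ j, c j p • gg b3 c3 j p

def Mspan (m : ℕ) (v : VV → VV) : Prop :=
  ∃ c : Fin 10 → VV → ℝ, (∀ j, ContDiff ℝ (⊤ : ℕ∞) (c j)) ∧
    (∀ j : Fin 10, m ≤ (j : ℕ) → c j = 0) ∧ v = sumG b3 c3 c

lemma smooth_gg (j : Fin 10) : ContDiff ℝ (⊤ : ℕ∞) (gg b3 c3 j) := by
  fin_cases j
  · show ContDiff ℝ (⊤ : ℕ∞) (gW1 b3 c3); unfold gW1; fun_prop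
  · show ContDiff ℝ (⊤ : ℕ∞) (cst 9); unfold cst; fun_prop
  · show ContDiff ℝ (⊤ : ℕ∞) (cst 10); unfold cst; fun_prop
  · show ContDiff ℝ (⊤ : ℕ∞) (gX b3 c3); unfold gX; fun_prop
  · show ContDiff ℝ (⊤ : ℕ∞) (cst 7); unfold cst; fun_prop
  · show ContDiff ℝ (⊤ : ℕ∞) gS; unfold gS; fun_prop
  · show ContDiff ℝ (⊤ : ℕ∞) gY; unfold gY; fun_prop
  · show ContDiff ℝ (⊤ : ℕ∞) (cst 5); unfold cst; fun_prop
  · show ContDiff ℝ (⊤ : ℕ∞) gQ; unfold gQ; fun_prop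
  · show ContDiff ℝ (⊤ : ℕ∞) gR; unfold gR; fun_prop

lemma smooth_sumG {c : Fin 10 → VV → ℝ} (hc : ∀ j, ContDiff ℝ (⊤ : ℕ∞) (c j)) :
    ContDiff ℝ (⊤ : ℕ∞) (sumG b3 c3 c) := by
  unfold sumG
  exact ContDiff.sum fun j _ => (hc j).smul (smooth_gg b3 c3 j)

lemma Mspan_smooth {m v} (h : Mspan b3 c3 m v) : ContDiff ℝ (⊤ : ℕ∞) v := by
  obtain ⟨c, hc, -, rfl⟩ := h; exact smooth_sumG b3 c3 hc

lemma fderiv_sumG {c : Fin 10 → VV → ℝ} (hc : ∀ j, ContDiff ℝ (⊤ : ℕ∞) (c j)) (p w : VV) :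
    fderiv ℝ (sumG b3 c3 c) p w =
      ∑ j, (c j p • fderiv ℝ (gg b3 c3 j) p w + (fderiv ℝ (c j) p w) • gg b3 c3 j p) := by
  unfold sumG
  rw [fderiv_fun_sum (A := fun j q => c j q • gg b3 c3 j q) (fun j _ =>
    (((hc j).differentiable (by simp)) p).smul (((smooth_gg b3 c3 j).differentiable (by simp)) p))]
  rw [ContinuousLinearMap.sum_apply]
  refine Finset.sum_congr rfl fun j _ => ?_
  rw [fderiv_fun_smul (((hc j).differentiable (by simp)) p)
    (((smooth_gg b3 c3 j).differentiable (by simp)) p)]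
  simp

lemma Mspan_zero (m : ℕ) : Mspan b3 c3 m 0 := by
  refine ⟨fun _ => 0, fun _ => contDiff_const, fun _ _ => rfl, ?_⟩
  funext p; simp [sumG]

lemma Mspan_eq {m v w} (h : Mspan b3 c3 m v) (e : v = w) : Mspan b3 c3 m w := e ▸ h

lemma Mspan_add {m v w} (hv : Mspan b3 c3 m v) (hw : Mspan b3 c3 m w) :
    Mspan b3 c3 m (v + w) := by
  obtain ⟨c, hc, hc0, rfl⟩ := hv
  obtain ⟨d, hd, hd0, rfl⟩ := hw
  refine ⟨fun j => c j + d j, fun j => (hc j).add (hd j),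
    fun j hj => by simp only []; rw [hc0 j hj, hd0 j hj]; simp, ?_⟩
  funext p
  simp [sumG, add_smul, Finset.sum_add_distrib]

lemma Mspan_smul {m v} (f : VV → ℝ) (hf : ContDiff ℝ (⊤ : ℕ∞) f) (hv : Mspan b3 c3 m v) :
    Mspan b3 c3 m (fun p => f p • v p) := by
  obtain ⟨c, hc, hc0, rfl⟩ := hv
  refine ⟨fun j => fun p => f p * c j p, fun j => hf.mul (hc j),
    fun j hj => by have := hc0 j hj; funext p; simp [congrFun this p], ?_⟩
  funext p
  simp [sumG, Finset.mul_sum, Finset.smul_sum, mul_smul]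

lemma Mspan_single {m : ℕ} (j : Fin 10) (f : VV → ℝ) (hf : ContDiff ℝ (⊤ : ℕ∞) f)
    (hj : (j : ℕ) < m ∨ f = fun _ => 0) :
    Mspan b3 c3 m (fun p => f p • gg b3 c3 j p) := by
  rcases hj with hj | rfl
  · refine ⟨fun k => if k = j then f else 0,
      fun k => by by_cases h : k = j <;> simp only [h, if_pos, if_neg, ite_true, ite_false] <;> [exact hf; exact contDiff_const], ?_, ?_⟩
    · intro k hk
      have : k ≠ j := by rintro rfl; omega
      simp [this]
    · funext p
      simp [sumG, Finset.sum_ite_eq', apply_ite (fun r : VV → ℝ => r p)]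
  · refine Mspan_eq b3 c3 (Mspan_zero b3 c3 m) ?_
    funext p; simp

lemma Mspan_finsum {m : ℕ} {ι : Type} [Fintype ι] (F : ι → VV → VV)
    (h : ∀ i, Mspan b3 c3 m (F i)) : Mspan b3 c3 m (fun p => ∑ i, F i p) := by
  classical
  choose cc h1 h2 h3 using h
  refine ⟨fun j => fun p => ∑ i, cc i j p,
    fun j => ContDiff.sum fun i _ => h1 i j,
    fun j hj => by funext p; simp [fun i => congrFun (h2 i j hj) p], ?_⟩
  funext p
  calc ∑ i, F i p = ∑ i, ∑ j, cc i j p • gg b3 c3 j p := by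
        refine Finset.sum_congr rfl fun i _ => ?_
        rw [h3 i]; rfl
    _ = ∑ j, (∑ i, cc i j p) • gg b3 c3 j p := by
        rw [Finset.sum_comm]
        simp [Finset.sum_smul]

lemma Mspan_mono {m m' v} (h : m ≤ m') (hv : Mspan b3 c3 m v) : Mspan b3 c3 m' v := by
  obtain ⟨c, hc, hc0, rfl⟩ := hv
  exact ⟨c, hc, fun j hj => hc0 j (le_trans h hj), rfl⟩

lemma fderiv_zero_fun (f : VV → ℝ) (h : f = 0) (p : VV) : fderiv ℝ f p = 0 := by
  subst h
  exact fderiv_const_apply 0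

end Mspan

section Bracket
variable (b3 c3 : ℝ)

lemma key_expand (d c : Fin 10 → VV → ℝ) (hd : ∀ j, ContDiff ℝ (⊤ : ℕ∞) (d j))
    (hc : ∀ j, ContDiff ℝ (⊤ : ℕ∞) (c j)) :
    lieBracket (sumG b3 c3 d) (sumG b3 c3 c) =
      (fun p => ∑ j, (fderiv ℝ (c j) p (sumG b3 c3 d p)) • gg b3 c3 j p)
      + (fun p => ∑ a, (-(fderiv ℝ (d a) p (sumG b3 c3 c p))) • gg b3 c3 a p)
      + (fun p => ∑ a, ∑ j, (d a p * c j p) • lieBracket (gg b3 c3 a) (gg b3 c3 j) p) := by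
  funext p
  show fderiv ℝ (sumG b3 c3 c) p (sumG b3 c3 d p)
      - fderiv ℝ (sumG b3 c3 d) p (sumG b3 c3 c p) = _
  rw [fderiv_sumG b3 c3 hc, fderiv_sumG b3 c3 hd]
  have e1 : ∀ j : Fin 10, fderiv ℝ (gg b3 c3 j) p (sumG b3 c3 d p)
      = ∑ a, d a p • fderiv ℝ (gg b3 c3 j) p (gg b3 c3 a p) := by
    intro j
    show fderiv ℝ (gg b3 c3 j) p (∑ a, d a p • gg b3 c3 a p) = _
    rw [map_sum]
    exact Finset.sum_congr rfl fun a _ => (fderiv ℝ (gg b3 c3 j) p).map_smul _ _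
  have e2 : ∀ a : Fin 10, fderiv ℝ (gg b3 c3 a) p (sumG b3 c3 c p)
      = ∑ j, c j p • fderiv ℝ (gg b3 c3 a) p (gg b3 c3 j p) := by
    intro a
    show fderiv ℝ (gg b3 c3 a) p (∑ j, c j p • gg b3 c3 j p) = _
    rw [map_sum]
    exact Finset.sum_congr rfl fun j _ => (fderiv ℝ (gg b3 c3 a) p).map_smul _ _
  simp only [Pi.add_apply, e1, e2, lieBracket]
  simp only [Finset.smul_sum, smul_smul, smul_sub, Finset.sum_sub_distrib,
    Finset.sum_add_distrib, neg_smul]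
  rw [Finset.sum_comm (s := Finset.univ) (t := Finset.univ)
    (f := fun j a => (c j p * d a p) • fderiv ℝ (gg b3 c3 j) p (gg b3 c3 a p))]
  simp only [mul_comm]
  simp only [Finset.sum_neg_distrib, neg_one_smul]
  abel
end Bracket

section BracketMem
variable (b3 c3 : ℝ)

lemma Mspan_bracket {u v : VV → VV} {m m' : ℕ} (hm : m ≤ m') (h3 : 3 ≤ m')
    (htab : ∀ a j : Fin 10, (a : ℕ) < 3 → (j : ℕ) < m →
      ∃ (ε : ℝ) (k : Fin 10), lieBracket (gg b3 c3 a) (gg b3 c3 j)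
        = (fun p => ε • gg b3 c3 k p) ∧ (k : ℕ) < m')
    (hu : Mspan b3 c3 3 u) (hv : Mspan b3 c3 m v) :
    Mspan b3 c3 m' (lieBracket u v) := by
  obtain ⟨d, hd, hd0, rfl⟩ := hu
  obtain ⟨c, hc, hc0, rfl⟩ := hv
  rw [key_expand b3 c3 d c hd hc]
  refine Mspan_add b3 c3 (Mspan_add b3 c3 ?_ ?_) ?_
  · refine Mspan_finsum b3 c3 _ fun j => ?_
    refine Mspan_single b3 c3 j _
      (((hc j).fderiv_right (by simp)).clm_apply (smooth_sumG b3 c3 hd)) ?_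
    by_cases hj : (j : ℕ) < m'
    · exact Or.inl hj
    · refine Or.inr ?_
      funext p
      rw [fderiv_zero_fun (c j) (hc0 j (le_trans hm (not_lt.mp hj)))]
      simp
  · refine Mspan_finsum b3 c3 _ fun a => ?_
    refine Mspan_single b3 c3 a _
      ((((hd a).fderiv_right (by simp)).clm_apply (smooth_sumG b3 c3 hc)).neg) ?_
    by_cases ha : (a : ℕ) < 3
    · exact Or.inl (lt_of_lt_of_le ha h3)
    · refine Or.inr ?_
      funext p
      rw [fderiv_zero_fun (d a) (hd0 a (not_lt.mp ha))]
      simp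
  · refine Mspan_finsum b3 c3 _ fun a => Mspan_finsum b3 c3 _ fun j => ?_
    by_cases ha : (a : ℕ) < 3
    · by_cases hj : (j : ℕ) < m
      · obtain ⟨ε, k, heq, hk⟩ := htab a j ha hj
        have e : (fun p => (d a p * c j p) • lieBracket (gg b3 c3 a) (gg b3 c3 j) p)
            = fun p => (d a p * c j p * ε) • gg b3 c3 k p := by
          simp only [heq, smul_smul]
        rw [e]
        exact Mspan_single b3 c3 k _ (((hd a).mul (hc j)).mul contDiff_const) (Or.inl hk)
      · refine Mspan_eq b3 c3 (Mspan_zero b3 c3 m') ?_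
        funext p
        rw [show c j = 0 from hc0 j (not_lt.mp hj)]
        simp
    · refine Mspan_eq b3 c3 (Mspan_zero b3 c3 m') ?_
      funext p
      rw [show d a = 0 from hd0 a (not_lt.mp ha)]
      simp

end BracketMem

section Phi
variable (b3 c3 : ℝ)

lemma gg_at0_012 (j : Fin 10) :
    gg b3 c3 j 0 0 = 0 ∧ gg b3 c3 j 0 1 = 0 ∧ gg b3 c3 j 0 2 = 0 := by
  fin_cases j
  · show gW1 b3 c3 0 0 = 0 ∧ gW1 b3 c3 0 1 = 0 ∧ gW1 b3 c3 0 2 = 0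
    refine ⟨?_, ?_, ?_⟩ <;> simp [gW1, Pi.single_apply]
  · show cst 9 0 0 = 0 ∧ cst 9 0 1 = 0 ∧ cst 9 0 2 = 0
    refine ⟨?_, ?_, ?_⟩ <;> simp [cst, Pi.single_apply]
  · show cst 10 0 0 = 0 ∧ cst 10 0 1 = 0 ∧ cst 10 0 2 = 0
    refine ⟨?_, ?_, ?_⟩ <;> simp [cst, Pi.single_apply]
  · show gX b3 c3 0 0 = 0 ∧ gX b3 c3 0 1 = 0 ∧ gX b3 c3 0 2 = 0
    refine ⟨?_, ?_, ?_⟩ <;> simp [gX, Pi.single_apply]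
  · show cst 7 0 0 = 0 ∧ cst 7 0 1 = 0 ∧ cst 7 0 2 = 0
    refine ⟨?_, ?_, ?_⟩ <;> simp [cst, Pi.single_apply]
  · show gS 0 0 = 0 ∧ gS 0 1 = 0 ∧ gS 0 2 = 0
    refine ⟨?_, ?_, ?_⟩ <;> simp [gS, Pi.single_apply]
  · show gY 0 0 = 0 ∧ gY 0 1 = 0 ∧ gY 0 2 = 0
    refine ⟨?_, ?_, ?_⟩ <;> simp [gY, Pi.single_apply]
  · show cst 5 0 0 = 0 ∧ cst 5 0 1 = 0 ∧ cst 5 0 2 = 0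
    refine ⟨?_, ?_, ?_⟩ <;> simp [cst, Pi.single_apply]
  · show gQ 0 0 = 0 ∧ gQ 0 1 = 0 ∧ gQ 0 2 = 0
    refine ⟨?_, ?_, ?_⟩ <;> simp [gQ, Pi.single_apply]
  · show gR 0 0 = 0 ∧ gR 0 1 = 0 ∧ gR 0 2 = 0
    refine ⟨?_, ?_, ?_⟩ <;> simp [gR, Pi.single_apply]

lemma gg_at0_5 (a : Fin 10) (ha : (a : ℕ) < 3) : gg b3 c3 a 0 5 = 0 := by
  fin_cases a
  · show gW1 b3 c3 0 5 = 0; simp [gW1, Pi.single_apply]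
  · show cst 9 0 5 = 0; simp [cst, Pi.single_apply]
  · show cst 10 0 5 = 0; simp [cst, Pi.single_apply]
  all_goals exact absurd ha (by decide)

lemma Dgg_at0_012 (j : Fin 10) (w : VV) (hw : w 5 = 0) :
    fderiv ℝ (gg b3 c3 j) 0 w 0 = 0 ∧ fderiv ℝ (gg b3 c3 j) 0 w 1 = 0
      ∧ fderiv ℝ (gg b3 c3 j) 0 w 2 = 0 := by
  fin_cases j
  · show fderiv ℝ (gW1 b3 c3) 0 w 0 = 0 ∧ fderiv ℝ (gW1 b3 c3) 0 w 1 = 0 ∧ fderiv ℝ (gW1 b3 c3) 0 w 2 = 0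
    rw [fderiv_gW1]
    refine ⟨?_, ?_, ?_⟩ <;> simp [Pi.single_apply]
  · show fderiv ℝ (cst 9) 0 w 0 = 0 ∧ fderiv ℝ (cst 9) 0 w 1 = 0 ∧ fderiv ℝ (cst 9) 0 w 2 = 0
    rw [fderiv_cst]; exact ⟨rfl, rfl, rfl⟩
  · show fderiv ℝ (cst 10) 0 w 0 = 0 ∧ fderiv ℝ (cst 10) 0 w 1 = 0 ∧ fderiv ℝ (cst 10) 0 w 2 = 0
    rw [fderiv_cst]; exact ⟨rfl, rfl, rfl⟩
  · show fderiv ℝ (gX b3 c3) 0 w 0 = 0 ∧ fderiv ℝ (gX b3 c3) 0 w 1 = 0 ∧ fderiv ℝ (gX b3 c3) 0 w 2 = 0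
    rw [fderiv_gX]
    refine ⟨?_, ?_, ?_⟩ <;> simp [Pi.single_apply, hw]
  · show fderiv ℝ (cst 7) 0 w 0 = 0 ∧ fderiv ℝ (cst 7) 0 w 1 = 0 ∧ fderiv ℝ (cst 7) 0 w 2 = 0
    rw [fderiv_cst]; exact ⟨rfl, rfl, rfl⟩
  · show fderiv ℝ gS 0 w 0 = 0 ∧ fderiv ℝ gS 0 w 1 = 0 ∧ fderiv ℝ gS 0 w 2 = 0
    rw [fderiv_gS]
    refine ⟨?_, ?_, ?_⟩ <;> simp [Pi.single_apply]
  · show fderiv ℝ gY 0 w 0 = 0 ∧ fderiv ℝ gY 0 w 1 = 0 ∧ fderiv ℝ gY 0 w 2 = 0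
    rw [fderiv_gY]
    refine ⟨?_, ?_, ?_⟩ <;> simp [Pi.single_apply]
  · show fderiv ℝ (cst 5) 0 w 0 = 0 ∧ fderiv ℝ (cst 5) 0 w 1 = 0 ∧ fderiv ℝ (cst 5) 0 w 2 = 0
    rw [fderiv_cst]; exact ⟨rfl, rfl, rfl⟩
  · show fderiv ℝ gQ 0 w 0 = 0 ∧ fderiv ℝ gQ 0 w 1 = 0 ∧ fderiv ℝ gQ 0 w 2 = 0
    rw [fderiv_gQ]
    refine ⟨?_, ?_, ?_⟩ <;> simp [Pi.single_apply]
  · show fderiv ℝ gR 0 w 0 = 0 ∧ fderiv ℝ gR 0 w 1 = 0 ∧ fderiv ℝ gR 0 w 2 = 0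
    rw [fderiv_gR]
    refine ⟨?_, ?_, ?_⟩ <;> simp [Pi.single_apply]

lemma DggA_at0_012 (a : Fin 10) (ha : (a : ℕ) < 3) (w : VV) :
    fderiv ℝ (gg b3 c3 a) 0 w 0 = 0 ∧ fderiv ℝ (gg b3 c3 a) 0 w 1 = 0
      ∧ fderiv ℝ (gg b3 c3 a) 0 w 2 = 0 := by
  fin_cases a
  · show fderiv ℝ (gW1 b3 c3) 0 w 0 = 0 ∧ fderiv ℝ (gW1 b3 c3) 0 w 1 = 0 ∧ fderiv ℝ (gW1 b3 c3) 0 w 2 = 0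
    rw [fderiv_gW1]
    refine ⟨?_, ?_, ?_⟩ <;> simp [Pi.single_apply]
  · show fderiv ℝ (cst 9) 0 w 0 = 0 ∧ fderiv ℝ (cst 9) 0 w 1 = 0 ∧ fderiv ℝ (cst 9) 0 w 2 = 0
    rw [fderiv_cst]; exact ⟨rfl, rfl, rfl⟩
  · show fderiv ℝ (cst 10) 0 w 0 = 0 ∧ fderiv ℝ (cst 10) 0 w 1 = 0 ∧ fderiv ℝ (cst 10) 0 w 2 = 0
    rw [fderiv_cst]; exact ⟨rfl, rfl, rfl⟩
  all_goals exact absurd ha (by decide)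

lemma Mspan_Phi {m : ℕ} {v : VV → VV} (hv : Mspan b3 c3 m v) :
    v 0 0 = 0 ∧ v 0 1 = 0 ∧ v 0 2 = 0 := by
  obtain ⟨c, hc, hc0, rfl⟩ := hv
  refine ⟨?_, ?_, ?_⟩ <;>
  · show sumG b3 c3 c 0 _ = 0
    unfold sumG
    rw [Finset.sum_apply]
    refine Finset.sum_eq_zero fun j _ => ?_
    have h := gg_at0_012 b3 c3 j
    simp [h.1, h.2.1, h.2.2]

lemma Phi_bracket {u v : VV → VV} (hu : Mspan b3 c3 3 u) (hv : Mspan b3 c3 10 v) :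
    lieBracket u v 0 0 = 0 ∧ lieBracket u v 0 1 = 0 ∧ lieBracket u v 0 2 = 0 := by
  obtain ⟨d, hd, hd0, rfl⟩ := hu
  obtain ⟨c, hc, hc0, rfl⟩ := hv
  have hu5 : sumG b3 c3 d 0 5 = 0 := by
    unfold sumG
    rw [Finset.sum_apply]
    refine Finset.sum_eq_zero fun a _ => ?_
    by_cases ha : (a : ℕ) < 3
    · simp [gg_at0_5 b3 c3 a ha]
    · simp [congrFun (hd0 a (not_lt.mp ha)) 0]
  have main : ∀ k : Fin 11, k = 0 ∨ k = 1 ∨ k = 2 →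
      lieBracket (sumG b3 c3 d) (sumG b3 c3 c) 0 k = 0 := by
    intro k hk
    show (fderiv ℝ (sumG b3 c3 c) 0 (sumG b3 c3 d 0)
        - fderiv ℝ (sumG b3 c3 d) 0 (sumG b3 c3 c 0)) k = 0
    rw [Pi.sub_apply, fderiv_sumG b3 c3 hc, fderiv_sumG b3 c3 hd,
      Finset.sum_apply, Finset.sum_apply]
    have t1 : ∀ j : Fin 10, (c j 0 • fderiv ℝ (gg b3 c3 j) 0 (sumG b3 c3 d 0)
        + fderiv ℝ (c j) 0 (sumG b3 c3 d 0) • gg b3 c3 j 0) k = 0 := by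
      intro j
      have h1 := Dgg_at0_012 b3 c3 j _ hu5
      have h2 := gg_at0_012 b3 c3 j
      rcases hk with rfl | rfl | rfl <;>
        simp [h1.1, h1.2.1, h1.2.2, h2.1, h2.2.1, h2.2.2]
    have t2 : ∀ a : Fin 10, (d a 0 • fderiv ℝ (gg b3 c3 a) 0 (sumG b3 c3 c 0)
        + fderiv ℝ (d a) 0 (sumG b3 c3 c 0) • gg b3 c3 a 0) k = 0 := by
      intro a
      by_cases ha : (a : ℕ) < 3
      · have h1 := DggA_at0_012 b3 c3 a ha (sumG b3 c3 c 0)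
        have h2 := gg_at0_012 b3 c3 a
        rcases hk with rfl | rfl | rfl <;>
          simp [h1.1, h1.2.1, h1.2.2, h2.1, h2.2.1, h2.2.2]
      · have hz := hd0 a (not_lt.mp ha)
        rw [fderiv_zero_fun (d a) hz, congrFun hz 0]
        simp
    rw [Finset.sum_eq_zero fun j _ => t1 j, Finset.sum_eq_zero fun a _ => t2 a]
    simp
  exact ⟨main 0 (by norm_num), main 1 (by norm_num), main 2 (by norm_num)⟩

end Phi

section Main
variable (b3 c3 : ℝ)

def nn : ℕ → ℕ := fun i =>
  if i = 0 then 0 else if i = 1 then 3 else if i = 2 then 5 else if i = 3 then 7 else 10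

lemma nn_eq (n : ℕ) : nn n =
    if n = 0 then 0 else if n = 1 then 3 else if n = 2 then 5 else if n = 3 then 7 else 10 :=
  rfl

lemma nn_mono : ∀ i : ℕ, nn i ≤ nn (i + 1)
  | 0 => by decide
  | 1 => by decide
  | 2 => by decide
  | 3 => by decide
  | (n + 4) => le_of_eq rfl

lemma W1ekr'_eq : W1ekr' b3 c3 = gg b3 c3 0 := by
  funext p
  show _ = gW1 b3 c3 p
  unfold W1ekr' gW1
  module

lemma Mspan_gen {m : ℕ} (j : Fin 10) (hj : (j : ℕ) < m) : Mspan b3 c3 m (gg b3 c3 j) := by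
  refine Mspan_eq b3 c3
    (Mspan_single b3 c3 j (fun _ => 1) contDiff_const (Or.inl hj)) ?_
  funext p; simp

def Pred (i : ℕ) (v : VV → VV) : Prop :=
  (i ≤ 4 → Mspan b3 c3 (nn i) v) ∧ (i = 5 → v 0 0 = 0 ∧ v 0 1 = 0 ∧ v 0 2 = 0)

theorem main_ind {i : ℕ} {v : VV → VV}
    (h : SmallFlagMem (W1ekr' b3 c3) W2ekr' W3ekr' i v) : Pred b3 c3 i v := by
  induction h with
  | gen1 =>
    exact ⟨fun _ => by rw [W1ekr'_eq]; exact Mspan_gen b3 c3 0 (by norm_num [nn]),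
      fun h => by omega⟩
  | gen2 =>
    exact ⟨fun _ => Mspan_gen b3 c3 1 (by norm_num [nn]), fun h => by omega⟩
  | gen3 =>
    exact ⟨fun _ => Mspan_gen b3 c3 2 (by norm_num [nn]), fun h => by omega⟩
  | zero i =>
    exact ⟨fun _ => Mspan_zero b3 c3 _, fun _ => by simp⟩
  | add hv hw ihv ihw =>
    refine ⟨fun h4 => Mspan_add b3 c3 (ihv.1 h4) (ihw.1 h4), fun h5 => ?_⟩
    have a := ihv.2 h5; have b := ihw.2 h5
    exact ⟨by simp [a.1, b.1], by simp [a.2.1, b.2.1], by simp [a.2.2, b.2.2]⟩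
  | smul f hf hv ihv =>
    refine ⟨fun h4 => Mspan_smul b3 c3 f hf (ihv.1 h4), fun h5 => ?_⟩
    have a := ihv.2 h5
    exact ⟨by simp [a.1], by simp [a.2.1], by simp [a.2.2]⟩
  | mono hv ihv =>
    rename_i i v'
    refine ⟨fun h4 => Mspan_mono b3 c3 (nn_mono i) (ihv.1 (by omega)), fun h5 => ?_⟩
    exact Mspan_Phi b3 c3 (ihv.1 (by omega))
  | bracket hu hv ihu ihv =>
    rename_i i u' v'
    have hu3 : Mspan b3 c3 3 u' := ihu.1 (by norm_num)
    refine ⟨fun h4 => ?_, fun h5 => ?_⟩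
    · have hi : i ≤ 3 := by omega
      interval_cases i
      · refine Mspan_bracket b3 c3 (by decide) (by decide)
          (fun a j ha hj => absurd hj (by simp [nn_eq])) hu3 (ihv.1 (by norm_num))
      · refine Mspan_bracket b3 c3 (m := nn 1) (m' := nn 2) (by decide) (by decide)
          (fun a j ha hj => ?_) hu3 (ihv.1 (by norm_num))
        obtain ⟨ε, k, heq, b1, b2, b3'⟩ := lbtable b3 c3 a j ha (by simp [nn_eq] at hj; omega)
        refine ⟨ε, k, heq, ?_⟩
        have hj' : (j : ℕ) < 3 := by simpa [nn_eq] using hj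
        simpa [nn_eq] using b1 hj'
      · refine Mspan_bracket b3 c3 (m := nn 2) (m' := nn 3) (by decide) (by decide)
          (fun a j ha hj => ?_) hu3 (ihv.1 (by norm_num))
        obtain ⟨ε, k, heq, b1, b2, b3'⟩ := lbtable b3 c3 a j ha (by simp [nn_eq] at hj; omega)
        refine ⟨ε, k, heq, ?_⟩
        have hj' : (j : ℕ) < 5 := by simpa [nn_eq] using hj
        simpa [nn_eq] using b2 hj'
      · refine Mspan_bracket b3 c3 (m := nn 3) (m' := nn 4) (by decide) (by decide)
          (fun a j ha hj => ?_) hu3 (ihv.1 (by norm_num))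
        obtain ⟨ε, k, heq, b1, b2, b3'⟩ := lbtable b3 c3 a j ha (by simp [nn_eq] at hj; omega)
        refine ⟨ε, k, heq, ?_⟩
        simpa [nn_eq] using b3'
    · have hi : i = 4 := by omega
      subst hi
      exact Phi_bracket b3 c3 hu3 (ihv.1 (by norm_num))

end Main

/-- For the EKR pseudo-normal form of type 1.2.1.3, every vector field `v` in
the fifth member `V₅` of the small flag satisfies
`v(0) ∈ span(e_{x₁}, e_{y₁}, e_{x₂}, e_{y₂}, e_{x₃}, e_{y₃}, e_{x₄}, e_{y₄})`;
that is, the components of `v(0)` along `e_t, e_{x₀}, e_{y₀}` all vanish. -/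
theorem ekr_1213_class (b3 c3 : ℝ) :
    ∀ v : (Fin 11 → ℝ) → Fin 11 → ℝ,
      SmallFlagMem (W1ekr' b3 c3) W2ekr' W3ekr' 5 v →
      v 0 ∈ Submodule.span ℝ
          (Set.range fun i : Fin 8 =>
            (Pi.single (⟨(i : ℕ) + 3, by have := i.isLt; omega⟩ : Fin 11) (1 : ℝ) :
              Fin 11 → ℝ)) ∧
      v 0 0 = 0 ∧ v 0 1 = 0 ∧ v 0 2 = 0 := by
  intro v h
  obtain ⟨h0, h1, h2⟩ := (main_ind b3 c3 h).2 rfl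
  refine ⟨?_, h0, h1, h2⟩
  have hv : v 0 = ∑ i : Fin 8,
      v 0 (⟨(i : ℕ) + 3, by have := i.isLt; omega⟩ : Fin 11) •
        (Pi.single (⟨(i : ℕ) + 3, by have := i.isLt; omega⟩ : Fin 11) (1 : ℝ) :
          Fin 11 → ℝ) := by
    funext k
    rw [Finset.sum_apply]
    fin_cases k <;>
      simp (config := { decide := true }) [Fin.sum_univ_eight, Pi.single_apply,
        h0, h1, h2] <;> (congr 1 <;> decide)
  rw [hv]
  exact Submodule.sum_mem _ fun i _ =>
    Submodule.smul_mem _ _ (Submodule.subset_span ⟨i, rfl⟩)
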